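/- Let Q be a quasi-abelian category with enough projectives and let 𝒫 be a sufficiently large class of projective objects of Q. Then for every non-positively graded cochain complex Q• = (… → Q^{-1} → Q^0) in Q there exist a non-positively graded cochain complex P• with every component P^k belonging to 𝒫 and a chain map π : P• → Q• such that (i) every component π^k : P^k → Q^k is a strict epimorphism, and (ii) for every projective object P of Q the induced map of cochain complexes of abelian groups Hom(P, P•) → Hom(P, Q•) is a quasi-isomorphism (induces isomorphisms on all cohomology groups). -/

import Mathlib

open CategoryTheory CategoryTheory.Limits

universe v u

/-- A morphism is a strict epimorphism if it is a cokernel of some morphism. -/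
def IsStrictEpi {C : Type u} [Category.{v} C] [HasZeroMorphisms C]
    {X Y : C} (f : X ⟶ Y) : Prop :=
  ∃ (Z : C) (g : Z ⟶ X) (w : g ≫ f = 0), Nonempty (IsColimit (CokernelCofork.ofπ f w))

/-- A morphism is a strict monomorphism if it is a kernel of some morphism. -/
def IsStrictMono {C : Type u} [Category.{v} C] [HasZeroMorphisms C]
    {X Y : C} (f : X ⟶ Y) : Prop :=
  ∃ (Z : C) (g : Y ⟶ Z) (w : f ≫ g = 0), Nonempty (IsLimit (KernelFork.ofι f w))

/-- A quasi-abelian category: an additive category (preadditive with all finite limits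
and colimits) in which strict epimorphisms are stable under pullback and strict
monomorphisms are stable under pushout. -/
class QuasiAbelian (C : Type u) [Category.{v} C] [Preadditive C]
    [HasFiniteLimits C] [HasFiniteColimits C] : Prop where
  pullback_strictEpi : ∀ {X Y Z : C} (f : X ⟶ Z) (g : Y ⟶ Z),
    IsStrictEpi f → IsStrictEpi (pullback.snd f g)
  pushout_strictMono : ∀ {X Y Z : C} (f : X ⟶ Y) (g : X ⟶ Z),
    IsStrictMono f → IsStrictMono (pushout.inr f g)

/-- An object `P` is projective (in the strict sense) if every morphism from `P` lifts
along every strict epimorphism, i.e. `Hom(P, −)` sends strict epimorphisms to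
surjections. -/
def IsStrictProjective {C : Type u} [Category.{v} C] [HasZeroMorphisms C] (P : C) : Prop :=
  ∀ ⦃X Y : C⦄ (f : X ⟶ Y), IsStrictEpi f → ∀ g : P ⟶ Y, ∃ h : P ⟶ X, h ≫ f = g

/-- A category has enough (strict) projectives if every object is the target of a strict
epimorphism from a projective object. -/
def HasEnoughStrictProjectives (C : Type u) [Category.{v} C] [HasZeroMorphisms C] : Prop :=
  ∀ X : C, ∃ (P : C) (p : P ⟶ X), IsStrictProjective P ∧ IsStrictEpi p

attribute [local instance] CategoryTheory.Limits.HasFiniteBiproducts.of_hasFiniteProducts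
attribute [local instance] CategoryTheory.Limits.hasBinaryBiproducts_of_finite_biproducts

/-- A class `Ps` of objects is a sufficiently large class of projectives: every member is
projective, `Ps` is closed under finite direct sums, and every projective object is a
retract of a member of `Ps`. -/
structure IsSufficientlyLarge {C : Type u} [Category.{v} C] [Preadditive C]
    [HasFiniteLimits C] [HasFiniteColimits C] (Ps : Set C) : Prop where
  projective : ∀ P ∈ Ps, IsStrictProjective P
  biprod_mem : ∀ P Q : C, P ∈ Ps → Q ∈ Ps → (P ⊞ Q) ∈ Ps
  retract : ∀ X : C, IsStrictProjective X →
    ∃ P ∈ Ps, ∃ (i : X ⟶ P) (r : P ⟶ X), i ≫ r = 𝟙 X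

/-!
Build `P•` degree by degree, keeping in degree `n` a subobject `Z_n ⊆ P_n` (the kernel of the
differential out of `P_n`) and a strict epimorphism `z_n` from `Z_n` onto the cycles of `Q•` in
degree `n`. Then `P_{n+1}` is a strict cover from `Ps` of the fibre product
`Q_{n+1} ×_{Ker d} Z_n`, whose two projections give `π_{n+1}` and the differential
`P_{n+1} ⟶ Z_n ⊆ P_n`. The kernel of `P_{n+1} ⟶ Z_n` is the pullback of that cover along
`Ker d_{n+1} ⟶ Q_{n+1} ×_{Ker d} Z_n`, so stability of strict epimorphisms under pullback makes
both `π_{n+1}` and `z_{n+1}` strict epimorphisms. For projective `P`, lifting along `z_n` gives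
surjectivity of `Hom(P, π)` on cohomology, and lifting along the cover of the fibre product gives
injectivity.
-/

section StrictEpi

variable {C : Type u} [Category.{v} C]

lemma IsStrictEpi.epi [HasZeroMorphisms C] {X Y : C} {f : X ⟶ Y} (hf : IsStrictEpi f) : Epi f :=
  let ⟨_, _, _, ⟨hc⟩⟩ := hf
  ⟨fun _ _ h => Cofork.IsColimit.hom_ext hc h⟩

lemma IsStrictEpi.of_desc [HasZeroMorphisms C] {W X Y : C} {g : W ⟶ X} {f : X ⟶ Y} [Epi f]
    (w : g ≫ f = 0) (desc : ∀ ⦃T : C⦄ (t : X ⟶ T), g ≫ t = 0 → ∃ t' : Y ⟶ T, f ≫ t' = t) :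
    IsStrictEpi f :=
  ⟨W, g, w, ⟨CokernelCofork.IsColimit.ofπ' f w fun t ht =>
    ⟨(desc t ht).choose, (desc t ht).choose_spec⟩⟩⟩

lemma IsStrictEpi.exists_desc [HasZeroMorphisms C] {X Y T : C} {f : X ⟶ Y} (hf : IsStrictEpi f)
    [HasKernel f] {t : X ⟶ T} (ht : kernel.ι f ≫ t = 0) : ∃ t' : Y ⟶ T, f ≫ t' = t := by
  obtain ⟨_, g, w, ⟨hc⟩⟩ := hf
  have hgt : g ≫ t = 0 := by rw [← kernel.lift_ι f g w, Category.assoc, ht, comp_zero]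
  exact ⟨_, (CokernelCofork.IsColimit.desc' hc t hgt).2⟩

-- A split epimorphism `r` with section `s` is the cokernel of the idempotent `𝟙 - r ≫ s`.
lemma IsStrictEpi.of_comp_eq_id [Preadditive C] {X Y : C} {r : X ⟶ Y} {s : Y ⟶ X}
    (hsr : s ≫ r = 𝟙 Y) : IsStrictEpi r := by
  have : Epi r := ⟨fun u v h => by simpa [reassoc_of% hsr] using s ≫= h⟩
  refine .of_desc (g := 𝟙 X - r ≫ s) (by simp [hsr]) fun T t ht => ⟨s ≫ t, ?_⟩
  rw [Preadditive.sub_comp, Category.id_comp, sub_eq_zero, Category.assoc] at ht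
  exact ht.symm

lemma IsStrictEpi.of_isIso [Preadditive C] {X Y : C} (f : X ⟶ Y) [IsIso f] : IsStrictEpi f :=
  .of_comp_eq_id (IsIso.inv_hom_id f)

variable [Preadditive C] [HasFiniteLimits C] [HasFiniteColimits C] [QuasiAbelian C]

-- `f ≫ g` is the cokernel of `f⁻¹(ker g) ⟶ X`; the quasi-abelian axiom makes
-- `f⁻¹(ker g) ⟶ ker g` an epimorphism.
lemma IsStrictEpi.comp {X Y Z : C} {f : X ⟶ Y} {g : Y ⟶ Z} (hf : IsStrictEpi f)
    (hg : IsStrictEpi g) : IsStrictEpi (f ≫ g) := by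
  have := hf.epi
  have := hg.epi
  have hsnd : Epi (pullback.snd f (kernel.ι g)) :=
    (QuasiAbelian.pullback_strictEpi f (kernel.ι g) hf).epi
  refine .of_desc (g := pullback.fst f (kernel.ι g))
    (by rw [pullback.condition_assoc, kernel.condition, comp_zero]) fun T t ht => ?_
  have hkf : kernel.ι f ≫ t = 0 := by
    rw [← pullback.lift_fst (f := f) (g := kernel.ι g) (kernel.ι f) 0 (by simp), Category.assoc,
      ht, comp_zero]
  obtain ⟨t', rfl⟩ := hf.exists_desc hkf
  have hkg : kernel.ι g ≫ t' = 0 := by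
    rw [← cancel_epi (pullback.snd f (kernel.ι g)), ← pullback.condition_assoc, ht, comp_zero]
  obtain ⟨u, rfl⟩ := hg.exists_desc hkg
  exact ⟨u, Category.assoc _ _ _⟩

lemma CategoryTheory.IsPullback.isStrictEpi_snd {P X Y Z : C} {fst : P ⟶ X} {snd : P ⟶ Y}
    {f : X ⟶ Z} {g : Y ⟶ Z} (h : IsPullback fst snd f g) (hf : IsStrictEpi f) :
    IsStrictEpi snd := by
  rw [← h.isoPullback_hom_snd]
  exact (IsStrictEpi.of_isIso _).comp (QuasiAbelian.pullback_strictEpi f g hf)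

end StrictEpi

namespace CategoryTheory.ShortComplex

lemma ab_quasiIso_of_lifting {S T : ShortComplex AddCommGrpCat.{v}} (φ : S ⟶ T)
    (hsurj : ∀ y : T.X₂, T.g y = 0 → ∃ x : S.X₂, S.g x = 0 ∧ φ.τ₂ x = y)
    (hinj : ∀ x : S.X₂, S.g x = 0 → ∀ y : T.X₁, T.f y = φ.τ₂ x → ∃ a : S.X₁, S.f a = x) :
    QuasiIso φ := by
  set h₁ := S.abLeftHomologyData
  set h₂ := T.abLeftHomologyData
  rw [quasiIso_iff_isIso_leftHomologyMap' φ h₁ h₂, ConcreteCategory.isIso_iff_bijective]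
  have hκ (k : h₁.K) : (cyclesMap' φ h₁ h₂ k).1 = φ.τ₂ k.1 :=
    ConcreteCategory.congr_hom (cyclesMap'_i φ h₁ h₂) k
  have hψ (k : h₁.K) : leftHomologyMap' φ h₁ h₂ (h₁.π k) = h₂.π (cyclesMap' φ h₁ h₂ k) :=
    ConcreteCategory.congr_hom (leftHomologyπ_naturality' φ h₁ h₂) k
  constructor
  · rw [injective_iff_map_eq_zero]
    intro q hq
    obtain ⟨k, rfl⟩ : ∃ k : h₁.K, h₁.π k = q := QuotientAddGroup.mk'_surjective _ q
    have hq' : QuotientAddGroup.mk' T.abToCycles.range (cyclesMap' φ h₁ h₂ k) = 0 :=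
      (hψ k).symm.trans hq
    obtain ⟨y, hy⟩ := (QuotientAddGroup.eq_zero_iff _).mp hq'
    obtain ⟨a, ha⟩ := hinj k.1 k.2 y ((congrArg Subtype.val hy).trans (hκ k))
    change QuotientAddGroup.mk' S.abToCycles.range k = 0
    exact (QuotientAddGroup.eq_zero_iff _).mpr ⟨a, Subtype.ext ha⟩
  · intro q
    obtain ⟨k, rfl⟩ : ∃ k : h₂.K, h₂.π k = q := QuotientAddGroup.mk'_surjective _ q
    obtain ⟨x, hx, hxk⟩ := hsurj k.1 k.2
    exact ⟨h₁.π ⟨x, hx⟩, (hψ _).trans (congrArg h₂.π (Subtype.ext ((hκ _).trans hxk)))⟩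

end CategoryTheory.ShortComplex

lemma quasiIso_map_preadditiveCoyoneda_of_lifting {C : Type u} [Category.{v} C] [Preadditive C]
    {K L : ChainComplex C ℕ} (f : K ⟶ L) (P : C)
    (hsurj : ∀ (n : ℕ) (y : P ⟶ L.X n), y ≫ L.d n (n - 1) = 0 →
      ∃ x : P ⟶ K.X n, x ≫ K.d n (n - 1) = 0 ∧ x ≫ f.f n = y)
    (hinj : ∀ (n : ℕ) (x : P ⟶ K.X n), x ≫ K.d n (n - 1) = 0 →
      ∀ y : P ⟶ L.X (n + 1), y ≫ L.d (n + 1) n = x ≫ f.f n →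
        ∃ a : P ⟶ K.X (n + 1), a ≫ K.d (n + 1) n = x) :
    QuasiIso (((preadditiveCoyoneda.obj (Opposite.op P)).mapHomologicalComplex
      (ComplexShape.down ℕ)).map f) := by
  refine ⟨fun n => ?_⟩
  rw [quasiIsoAt_iff' _ (n + 1) n (n - 1) (by simp) (by cases n <;> simp)]
  exact ShortComplex.ab_quasiIso_of_lifting _ (hsurj n) (hinj n)

section IsPullback

variable {C : Type u} [Category.{v} C] [HasZeroMorphisms C] [HasFiniteLimits C]

lemma isPullback_kernelι_comp_snd {X Y K P K' : C} {b : X ⟶ K} {z : Y ⟶ K}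
    (e : P ⟶ pullback b z) {c : K' ⟶ X} [Mono c] (hc : c ≫ b = 0)
    {z' : kernel (e ≫ pullback.snd b z) ⟶ K'}
    (hz' : z' ≫ c = kernel.ι _ ≫ e ≫ pullback.fst b z) :
    IsPullback (kernel.ι (e ≫ pullback.snd b z)) z' e
      (pullback.lift c 0 (by rw [hc, zero_comp])) := by
  refine ⟨⟨pullback.hom_ext ?_ ?_⟩, ⟨PullbackCone.IsLimit.mk _
    (fun t => kernel.lift _ t.fst ?_) (fun t => kernel.lift_ι _ _ _) (fun t => ?_)
    (fun t l hl _ => by rw [← cancel_mono (kernel.ι _), hl, kernel.lift_ι])⟩⟩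
  · rw [Category.assoc, Category.assoc, pullback.lift_fst, hz']
  · rw [Category.assoc, Category.assoc, pullback.lift_snd, comp_zero, kernel.condition]
  · rw [← Category.assoc, t.condition, Category.assoc, pullback.lift_snd, comp_zero]
  · rw [← cancel_mono c, Category.assoc, hz', kernel.lift_ι_assoc, reassoc_of% t.condition,
      pullback.lift_fst]

end IsPullback

section Resolution

variable {C : Type u} [Category.{v} C] [Preadditive C] [HasFiniteLimits C]

structure StrictCover (Ps : Set C) (X : C) where
  P : C
  mem : P ∈ Ps
  π : P ⟶ X
  isStrictEpi_π : IsStrictEpi π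

lemma IsSufficientlyLarge.nonempty_strictCover [HasFiniteColimits C] [QuasiAbelian C]
    {Ps : Set C} (hPs : IsSufficientlyLarge Ps) (henough : HasEnoughStrictProjectives C)
    (X : C) : Nonempty (StrictCover Ps X) := by
  obtain ⟨Q, q, hQ, hq⟩ := henough X
  obtain ⟨P, hP, i, r, hir⟩ := hPs.retract Q hQ
  exact ⟨⟨P, hP, r ≫ q, (IsStrictEpi.of_comp_eq_id hir).comp hq⟩⟩

noncomputable def dToCycles (Qc : ChainComplex C ℕ) (n : ℕ) :
    Qc.X (n + 1) ⟶ kernel (Qc.d n (n - 1)) :=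
  kernel.lift _ (Qc.d (n + 1) n) (Qc.d_comp_d _ _ _)

lemma dToCycles_ι (Qc : ChainComplex C ℕ) (n : ℕ) :
    dToCycles Qc n ≫ kernel.ι _ = Qc.d (n + 1) n :=
  kernel.lift_ι _ _ _

/-- `ι` will be the kernel of the differential of the resolution out of `P` (with `Z = P` in
degree `0`). -/
structure ResolutionStage (Ps : Set C) (Qc : ChainComplex C ℕ) (n : ℕ)
    extends StrictCover Ps (Qc.X n) where
  Z : C
  ι : Z ⟶ P
  [mono_ι : Mono ι]
  z : Z ⟶ kernel (Qc.d n (n - 1))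
  isStrictEpi_z : IsStrictEpi z
  z_ι : z ≫ kernel.ι _ = ι ≫ π

attribute [instance] ResolutionStage.mono_ι

variable {Ps : Set C} (cover : ∀ X : C, StrictCover Ps X)

namespace ResolutionStage

variable {Qc : ChainComplex C ℕ} {n : ℕ} (s : ResolutionStage Ps Qc n)

noncomputable def nextCover : StrictCover Ps (pullback (dToCycles Qc n) s.z) :=
  cover _

noncomputable def δ : (s.nextCover cover).P ⟶ s.Z :=
  (s.nextCover cover).π ≫ pullback.snd _ _

noncomputable def nextπ : (s.nextCover cover).P ⟶ Qc.X (n + 1) :=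
  (s.nextCover cover).π ≫ pullback.fst _ _

lemma nextπ_d : s.nextπ cover ≫ Qc.d (n + 1) n = s.δ cover ≫ s.ι ≫ s.π := by
  rw [nextπ, δ, ← s.z_ι, Category.assoc, Category.assoc, ← pullback.condition_assoc,
    dToCycles_ι]

lemma exists_comp_δ_eq {T : C} (hT : IsStrictProjective T) (y : T ⟶ Qc.X (n + 1))
    (x : T ⟶ s.Z) (h : y ≫ Qc.d (n + 1) n = x ≫ s.ι ≫ s.π) :
    ∃ a : T ⟶ (s.nextCover cover).P, a ≫ s.δ cover = x := by
  have w : y ≫ dToCycles Qc n = x ≫ s.z := by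
    rw [← cancel_mono (kernel.ι _), Category.assoc, Category.assoc, dToCycles_ι, s.z_ι, h]
  obtain ⟨a, ha⟩ := hT _ (s.nextCover cover).isStrictEpi_π (pullback.lift y x w)
  exact ⟨a, by rw [δ, ← Category.assoc, ha, pullback.lift_snd]⟩

variable [HasFiniteColimits C] [QuasiAbelian C]

noncomputable def zero (Qc : ChainComplex C ℕ) : ResolutionStage Ps Qc 0 where
  toStrictCover := cover (Qc.X 0)
  Z := (cover (Qc.X 0)).P
  ι := 𝟙 _
  z := kernel.lift _ (cover (Qc.X 0)).π (by rw [Qc.shape 0 (0 - 1) (by simp), comp_zero])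
  isStrictEpi_z := by
    have : IsIso (kernel.ι (Qc.d 0 (0 - 1))) := by
      rw [Qc.shape 0 (0 - 1) (by simp)]; infer_instance
    rw [(IsIso.eq_comp_inv _).mpr (kernel.lift_ι _ _ _)]
    exact (cover (Qc.X 0)).isStrictEpi_π.comp (.of_isIso _)
  z_ι := by rw [kernel.lift_ι, Category.id_comp]

noncomputable def next : ResolutionStage Ps Qc (n + 1) where
  P := (s.nextCover cover).P
  mem := (s.nextCover cover).mem
  π := s.nextπ cover
  isStrictEpi_π := (s.nextCover cover).isStrictEpi_π.comp
    ((IsPullback.of_hasPullback _ _).flip.isStrictEpi_snd s.isStrictEpi_z)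
  Z := kernel (s.δ cover)
  ι := kernel.ι _
  z := kernel.lift (Qc.d (n + 1) n) (kernel.ι _ ≫ s.nextπ cover) (by
    rw [Category.assoc, nextπ_d, kernel.condition_assoc, zero_comp])
  isStrictEpi_z := (isPullback_kernelι_comp_snd _ (c := kernel.ι (Qc.d (n + 1) n))
    (by rw [← cancel_mono (kernel.ι _), Category.assoc, dToCycles_ι, kernel.condition,
      zero_comp]) (kernel.lift_ι _ _ _)).isStrictEpi_snd
    (s.nextCover cover).isStrictEpi_π
  z_ι := kernel.lift_ι _ _ _

lemma next_ι_δ_ι : (s.next cover).ι ≫ s.δ cover ≫ s.ι = 0 :=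
  kernel.condition_assoc _ _ |>.trans zero_comp

lemma exists_comp_next_ι {T : C} (x : T ⟶ (s.next cover).P) (hx : x ≫ s.δ cover = 0) :
    ∃ x' : T ⟶ (s.next cover).Z, x' ≫ (s.next cover).ι = x :=
  ⟨kernel.lift _ x hx, kernel.lift_ι _ _ _⟩

end ResolutionStage

variable [HasFiniteColimits C] [QuasiAbelian C] (Qc : ChainComplex C ℕ)

noncomputable def resolutionStage : ∀ n : ℕ, ResolutionStage Ps Qc n
  | 0 => .zero cover Qc
  | n + 1 => (resolutionStage n).next cover

noncomputable def resolution : ChainComplex C ℕ :=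
  ChainComplex.of (fun n => (resolutionStage cover Qc n).P)
    (fun n => (resolutionStage cover Qc n).δ cover ≫ (resolutionStage cover Qc n).ι)
    (fun n => (Category.assoc _ _ _).trans
      ((congrArg (_ ≫ ·) ((resolutionStage cover Qc n).next_ι_δ_ι cover)).trans comp_zero))

lemma resolution_d_succ (n : ℕ) : (resolution cover Qc).d (n + 1) n =
    (resolutionStage cover Qc n).δ cover ≫ (resolutionStage cover Qc n).ι := by
  simp only [resolution, ChainComplex.of_d]
  rfl

noncomputable def resolutionπ : resolution cover Qc ⟶ Qc where
  f n := (resolutionStage cover Qc n).π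
  comm' := by
    rintro i j (rfl : j + 1 = i)
    rw [resolution_d_succ]
    exact ((resolutionStage cover Qc j).nextπ_d cover).trans (Category.assoc _ _ _).symm

lemma resolutionStage_ι_comp_d (n : ℕ) :
    (resolutionStage cover Qc n).ι ≫ (resolution cover Qc).d n (n - 1) = 0 := by
  cases n with
  | zero =>
    rw [HomologicalComplex.shape _ 0 (0 - 1) (by simp)]
    exact comp_zero
  | succ n =>
    rw [Nat.add_sub_cancel, resolution_d_succ]
    exact (resolutionStage cover Qc n).next_ι_δ_ι cover

lemma exists_comp_resolutionStage_ι {T : C} (n : ℕ) (x : T ⟶ (resolution cover Qc).X n)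
    (hx : x ≫ (resolution cover Qc).d n (n - 1) = 0) :
    ∃ x' : T ⟶ (resolutionStage cover Qc n).Z, x' ≫ (resolutionStage cover Qc n).ι = x := by
  cases n with
  | zero => exact ⟨x, Category.comp_id x⟩
  | succ n =>
    rw [Nat.add_sub_cancel, resolution_d_succ] at hx
    exact (resolutionStage cover Qc n).exists_comp_next_ι cover x
      ((cancel_mono (resolutionStage cover Qc n).ι).mp ((Category.assoc _ _ _).trans hx |>.trans
        zero_comp.symm))

lemma quasiIso_map_resolutionπ {P : C} (hP : IsStrictProjective P) :
    QuasiIso (((preadditiveCoyoneda.obj (Opposite.op P)).mapHomologicalComplex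
      (ComplexShape.down ℕ)).map (resolutionπ cover Qc)) := by
  refine quasiIso_map_preadditiveCoyoneda_of_lifting _ P (fun n y hy => ?_)
    (fun n x hx y hy => ?_)
  · obtain ⟨w, hw⟩ := hP _ (resolutionStage cover Qc n).isStrictEpi_z (kernel.lift _ y hy)
    refine ⟨w ≫ (resolutionStage cover Qc n).ι, ?_, ?_⟩
    · exact (Category.assoc _ _ _).trans
        ((congrArg (w ≫ ·) (resolutionStage_ι_comp_d cover Qc n)).trans comp_zero)
    · change (w ≫ _) ≫ (resolutionStage cover Qc n).π = y
      rw [Category.assoc, ← ResolutionStage.z_ι, ← Category.assoc, hw, kernel.lift_ι]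
  · obtain ⟨x', rfl⟩ := exists_comp_resolutionStage_ι cover Qc n x hx
    obtain ⟨a, ha⟩ := (resolutionStage cover Qc n).exists_comp_δ_eq cover hP y x'
      (hy.trans (Category.assoc _ _ _))
    refine ⟨a, ?_⟩
    rw [resolution_d_succ]
    exact (Category.assoc _ _ _).symm.trans (congrArg (· ≫ _) ha)

end Resolution

/-- The cochain complex `Q•` is encoded as an `ℕ`-indexed chain complex: `Q^{-k} = Qc.X k`. -/
theorem exists_projective_resolution_of_complex
    {C : Type u} [Category.{v} C] [Preadditive C]
    [HasFiniteLimits C] [HasFiniteColimits C] [QuasiAbelian C]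
    (henough : HasEnoughStrictProjectives C)
    (Ps : Set C) (hPs : IsSufficientlyLarge Ps)
    (Qc : ChainComplex C ℕ) :
    ∃ (Pc : ChainComplex C ℕ) (π : Pc ⟶ Qc),
      (∀ k : ℕ, Pc.X k ∈ Ps) ∧
      (∀ k : ℕ, IsStrictEpi (π.f k)) ∧
      (∀ P : C, IsStrictProjective P →
        QuasiIso (((preadditiveCoyoneda.obj (Opposite.op P)).mapHomologicalComplex
          (ComplexShape.down ℕ)).map π)) := by
  let cover X := (hPs.nonempty_strictCover henough X).some
  exact ⟨resolution cover Qc, resolutionπ cover Qc, fun k => (resolutionStage cover Qc k).mem,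
    fun k => (resolutionStage cover Qc k).isStrictEpi_π,
    fun _ hP => quasiIso_map_resolutionπ cover Qc hP⟩
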